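/- arXiv:2508.12018 — 3 statements merged into one kernel-verified Lean document; each statement's English description precedes it below -/
import Mathlib

section
/- Let μ be a singular cardinal with cofinality κ, let δ ≤ μ be an ordinal, and let I be a κ⁺-complete proper ideal on δ. If there exists an I-almost distinct family F of functions from δ to κ, then 𝔡_μ ≥ |F|. -/
universe u

open Cardinal

/-- An ideal on a set (type) `A`: a collection of subsets of `A` closed under
taking subsets and finite unions. -/
def IsSetIdeal {A : Type u} (I : Set (Set A)) : Prop :=
  (∀ s t : Set A, s ⊆ t → t ∈ I → s ∈ I) ∧
  (∀ s t : Set A, s ∈ I → t ∈ I → s ∪ t ∈ I)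

/-- An ideal `I` is `θ`-complete if the union of any family of fewer than `θ`
members of `I` is again in `I`. -/
def IdealComplete {A : Type u} (I : Set (Set A)) (θ : Cardinal.{u}) : Prop :=
  ∀ S : Set (Set A), S ⊆ I → #S < θ → ⋃₀ S ∈ I

/-- `D` is a dominating family of functions `μ → κ`: every `f : μ → κ` is
dominated by some `g ∈ D`, i.e. `{α < μ : g(α) ≤ f(α)}` has cardinality `< μ`. -/
def IsDominatingFamily (μ κ : Cardinal.{u})
    (D : Set (μ.ord.ToType → κ.ord.ToType)) : Prop :=
  ∀ f : μ.ord.ToType → κ.ord.ToType, ∃ g ∈ D, #{α | g α ≤ f α} < μ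

/-- `𝔡_μ`: the least cardinality of a dominating family of functions `μ → κ`. -/
noncomputable def domNumber (μ κ : Cardinal.{u}) : Cardinal.{u} :=
  sInf {c | ∃ D : Set (μ.ord.ToType → κ.ord.ToType), IsDominatingFamily μ κ D ∧ #D = c}

/-!
Fix a dominating family `D` of size `𝔡_μ` and a map `π : μ → δ` all of whose fibres have size `μ`.
Every `f ∈ F` gives `f ∘ π : μ → κ`, which some `g ∈ D` dominates off a set of size at most `ν`,
with `ν` taken from a family of `κ = cf μ` cardinals cofinal in `μ`. For fixed `g` and `ν` fewer
than `κ` members of `F` can occur: given `κ` of them, `κ⁺`-completeness of `I` yields a point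
`a ∈ δ` where they take `κ` distinct values, while the union of their `κ` exceptional sets has
size `κ · ν < μ` and so misses some `α` in the fibre over `a`; all `κ` values then lie below
`g α < κ`, which is impossible. Hence `|F| ≤ 𝔡_μ · κ · κ = 𝔡_μ`, using `κ ≤ 𝔡_μ` by regularity
of `κ`.
-/

open Set Function

theorem exists_forall_lt_of_mk_lt_cof {α : Type u} [LinearOrder α] {s : Set α}
    (hs : #s < Order.cof α) : ∃ x, ∀ y ∈ s, y < x :=
  not_isCofinal_iff.1 fun h => (Order.cof_le h).not_gt hs

theorem Cardinal.aleph0_le_ord_cof {μ : Cardinal.{u}} (hμ : ℵ₀ ≤ μ) : ℵ₀ ≤ μ.ord.cof :=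
  Ordinal.aleph0_le_cof_iff.2 (Ordinal.one_lt_cof_iff.2 (isSuccLimit_ord hμ))

theorem Cardinal.exists_cofinal_family_lt (μ : Cardinal.{u}) :
    ∃ (ι : Type u) (b : ι → Cardinal.{u}), #ι = μ.ord.cof ∧ (∀ i, b i < μ) ∧
      ∀ c < μ, ∃ i, c ≤ b i := by
  obtain ⟨s, hs, hs_card⟩ := Order.exists_cof_eq μ.ord.ToType
  refine ⟨s, fun x => #(Iio x.1), by rw [hs_card, Ordinal.cof_toType], fun x => ?_, fun c hc => ?_⟩
  · simpa using mk_Iio_lt x.1 (by simp)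
  · have hc' : c.ord < Ordinal.type ((· < ·) : μ.ord.ToType → μ.ord.ToType → Prop) := by
      simpa using hc
    obtain ⟨y, hy⟩ := Ordinal.typein_surj _ hc'
    obtain ⟨x, hxs, hyx⟩ := hs y
    refine ⟨⟨x, hxs⟩, ?_⟩
    calc c = #(Iio y) := by
          rw [← card_ord c, ← hy]
          rfl
      _ ≤ #(Iio x) := mk_le_mk_of_subset (Iio_subset_Iio hyx)

theorem Cardinal.exists_mk_fiber_eq {α β : Type u} [Nonempty α] (hβ : ℵ₀ ≤ #β)
    (hαβ : #α ≤ #β) : ∃ π : β → α, ∀ a, #(π ⁻¹' {a}) = #β := by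
  obtain ⟨e⟩ : Nonempty (β ≃ α × β) := by
    rw [← Cardinal.eq, mk_prod, lift_id, lift_id, mul_eq_right hβ hαβ (mk_ne_zero α)]
  refine ⟨fun b => (e b).1, fun a => le_antisymm (mk_set_le _) ?_⟩
  refine mk_le_of_injective (f := fun b => (⟨e.symm (a, b), by simp⟩ : (fun b => (e b).1) ⁻¹' {a}))
    fun b b' h => ?_
  simpa using congrArg Subtype.val h

theorem IdealComplete.exists_injective_eval {A : Type u} {X : Type*} {ι : Type u}
    {I : Set (Set A)} {κ : Cardinal.{u}} (hcomp : IdealComplete I (Order.succ κ))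
    (hκ : ℵ₀ ≤ κ) (hproper : Set.univ ∉ I) {q : ι → A → X} (hι : #ι ≤ κ)
    (hq : ∀ i j, i ≠ j → {a | q i a = q j a} ∈ I) : ∃ a, Injective fun i => q i a := by
  let S : Set (Set A) := range fun p : {p : ι × ι // p.1 ≠ p.2} => {a | q p.1.1 a = q p.1.2 a}
  have hS_card : #S < Order.succ κ := by
    refine Order.lt_succ_of_le (mk_range_le.trans ((mk_subtype_le _).trans ?_))
    rw [mk_prod, lift_id, ← mul_eq_self hκ]
    exact mul_le_mul' hι hι
  have hS : ⋃₀ S ∈ I := hcomp S (by rintro _ ⟨p, rfl⟩; exact hq _ _ p.2) hS_card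
  obtain ⟨a, ha⟩ := (ne_univ_iff_exists_notMem _).1 fun h => hproper (h ▸ hS)
  refine ⟨a, fun i j hij => by_contra fun hne => ha ?_⟩
  exact mem_sUnion.2 ⟨_, ⟨⟨(i, j), hne⟩, rfl⟩, hij⟩

theorem mk_lt_of_injective_eval_of_mk_le {A β ι : Type u} {μ κ ν : Cardinal.{u}} (hμ : ℵ₀ ≤ μ)
    (hν : ν < μ) (hι : #ι < μ) {π : β → A} {a : A} (ha : μ ≤ #(π ⁻¹' {a}))
    (g : β → κ.ord.ToType) {q : ι → A → κ.ord.ToType} (hqa : Injective fun i => q i a)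
    (hq : ∀ i, #{b | g b ≤ q i (π b)} ≤ ν) : #ι < κ := by
  set W := ⋃ i, {b | g b ≤ q i (π b)}
  have hW : #W < μ :=
    (mk_iUnion_le _).trans_lt (mul_lt_of_lt hμ hι ((ciSup_le' hq).trans_lt hν))
  obtain ⟨b, hb, hbW⟩ := not_subset.1 fun h => (ha.trans (mk_le_mk_of_subset h)).not_gt hW
  have hlt : ∀ i, q i a < g b := by simpa [W, show π b = a from hb] using hbW
  calc #ι ≤ #(Iio (g b)) := mk_le_of_injective (f := fun i => ⟨q i a, hlt i⟩)
        fun i j h => hqa (congrArg Subtype.val h)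
    _ < κ := by simpa using mk_Iio_lt (g b) (by simp)

theorem mk_setOf_mk_le_lt_of_almostDistinct {A β : Type u} {I : Set (Set A)}
    {μ κ ν : Cardinal.{u}} (hμ : ℵ₀ ≤ μ) (hκ : ℵ₀ ≤ κ) (hκμ : κ < μ) (hν : ν < μ)
    (hproper : Set.univ ∉ I) (hcomp : IdealComplete I (Order.succ κ))
    {F : Set (A → κ.ord.ToType)} (hF : ∀ f ∈ F, ∀ g ∈ F, f ≠ g → {a | f a = g a} ∈ I)
    {π : β → A} (hπ : ∀ a, μ ≤ #(π ⁻¹' {a})) (g : β → κ.ord.ToType) :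
    #{f ∈ F | #{b | g b ≤ f (π b)} ≤ ν} < κ := by
  by_contra! h
  obtain ⟨e⟩ := (le_def _ _).1 ((mk_ord_toType κ).trans_le h)
  obtain ⟨a, ha⟩ := hcomp.exists_injective_eval hκ hproper
    (q := fun i => (e i).1) (by simp) fun i j hij =>
      hF _ (e i).2.1 _ (e j).2.1 fun h => hij (e.injective (Subtype.ext h))
  have := mk_lt_of_injective_eval_of_mk_le hμ hν (by simpa using hκμ) (hπ a) g ha
    fun i => (e i).2.2
  simp at this

theorem isDominatingFamily_univ {μ κ : Cardinal.{u}} [NoMaxOrder κ.ord.ToType] (hμ : μ ≠ 0) :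
    IsDominatingFamily μ κ Set.univ := by
  intro f
  choose g hg using fun x => exists_gt (f x)
  refine ⟨g, mem_univ g, ?_⟩
  have : {x | g x ≤ f x} = ∅ := eq_empty_of_forall_notMem fun x hx => (hg x).not_ge hx
  rw [this, mk_eq_zero]
  exact pos_iff_ne_zero.2 hμ

theorem exists_isDominatingFamily_mk_eq_domNumber {μ κ : Cardinal.{u}}
    [NoMaxOrder κ.ord.ToType] (hμ : μ ≠ 0) :
    ∃ D, IsDominatingFamily μ κ D ∧ #D = domNumber μ κ :=
  csInf_mem (s := {c | ∃ D, IsDominatingFamily μ κ D ∧ #D = c})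
    ⟨_, Set.univ, isDominatingFamily_univ hμ, rfl⟩

theorem le_mk_of_isDominatingFamily {μ κ : Cardinal.{u}} (hκ : κ.ord.cof = κ)
    {D : Set (μ.ord.ToType → κ.ord.ToType)} (hD : IsDominatingFamily μ κ D) : κ ≤ #D := by
  by_contra! hD_card
  have hbound : ∀ x, ∃ y, ∀ z ∈ (fun g => g x) '' D, z < y := fun x =>
    exists_forall_lt_of_mk_lt_cof <| by
      rw [Ordinal.cof_toType, hκ]
      exact mk_image_le.trans_lt hD_card
  choose f hf using hbound
  obtain ⟨g, hg, hgf⟩ := hD f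
  have : {x | g x ≤ f x} = Set.univ := eq_univ_of_forall fun x => (hf x _ ⟨g, hg, rfl⟩).le
  simp [this] at hgf

theorem mk_le_mul_of_isDominatingFamily {A : Type u} [Nonempty A] {I : Set (Set A)}
    {μ κ : Cardinal.{u}} (hμ : ℵ₀ ≤ μ) (hκμ : κ < μ) (hκ : μ.ord.cof = κ) (hA : #A ≤ μ)
    (hproper : Set.univ ∉ I) (hcomp : IdealComplete I (Order.succ κ))
    {F : Set (A → κ.ord.ToType)} (hF : ∀ f ∈ F, ∀ g ∈ F, f ≠ g → {a | f a = g a} ∈ I)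
    {D : Set (μ.ord.ToType → κ.ord.ToType)} (hD : IsDominatingFamily μ κ D) :
    #F ≤ #D * κ := by
  have hκ₀ : ℵ₀ ≤ κ := hκ ▸ aleph0_le_ord_cof hμ
  obtain ⟨ι, b, hι, hb_lt, hb_cofinal⟩ := exists_cofinal_family_lt μ
  obtain ⟨π, hπ⟩ := exists_mk_fiber_eq (β := μ.ord.ToType) (by simpa) (by simpa)
  have hcover : F ⊆ ⋃ p : D × ι, {f ∈ F | #{x | p.1.1 x ≤ f (π x)} ≤ b p.2} := by
    intro f hf
    obtain ⟨g, hg, hgf⟩ := hD (f ∘ π)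
    obtain ⟨i, hi⟩ := hb_cofinal _ hgf
    exact mem_iUnion.2 ⟨(⟨g, hg⟩, i), hf, hi⟩
  calc #F ≤ #(D × ι) * ⨆ p : D × ι, #{f ∈ F | #{x | p.1.1 x ≤ f (π x)} ≤ b p.2} :=
        (mk_le_mk_of_subset hcover).trans (mk_iUnion_le _)
    _ ≤ #D * κ * κ := by
        rw [mk_prod, lift_id, lift_id, hι, hκ]
        refine mul_le_mul' le_rfl (ciSup_le' fun p => ?_)
        exact (mk_setOf_mk_le_lt_of_almostDistinct hμ hκ₀ hκμ (hb_lt p.2) hproper hcomp hF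
          (fun a => (hπ a).ge.trans' (by simp)) p.1.1).le
    _ = #D * κ := by rw [mul_assoc, mul_eq_self hκ₀]

theorem domNumber_ge_of_adf_general (μ κ : Cardinal.{u})
    (hμ : ℵ₀ ≤ μ) (hsing : μ.ord.cof < μ) (hκ : μ.ord.cof = κ)
    (δ : Ordinal.{u}) (hδ : δ ≤ μ.ord)
    (I : Set (Set δ.ToType))
    (hproper : Set.univ ∉ I)
    (hcomp : IdealComplete I (Order.succ κ))
    (F : Set (δ.ToType → κ.ord.ToType))
    (hF : ∀ f ∈ F, ∀ g ∈ F, f ≠ g → {a | f a = g a} ∈ I) :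
    #F ≤ domNumber μ κ := by
  have hκ₀ : ℵ₀ ≤ κ := hκ ▸ aleph0_le_ord_cof hμ
  have : NoMaxOrder κ.ord.ToType := noMaxOrder hκ₀
  have : Nonempty δ.ToType := by
    by_contra hδ₀
    rw [univ_eq_empty_iff.2 (not_nonempty_iff.1 hδ₀)] at hproper
    exact hproper (by simpa using hcomp ∅ (empty_subset I) (by simp))
  obtain ⟨D, hD, hD_card⟩ :=
    exists_isDominatingFamily_mk_eq_domNumber (κ := κ) (aleph0_pos.trans_le hμ).ne'
  have hκD : κ ≤ #D := le_mk_of_isDominatingFamily (hκ ▸ Ordinal.cof_ord_cof _) hD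
  have hδμ : #δ.ToType ≤ μ := by simpa using Ordinal.card_le_card hδ
  calc #F ≤ #D * κ :=
        mk_le_mul_of_isDominatingFamily hμ (hκ ▸ hsing) hκ hδμ hproper hcomp hF hD
    _ = domNumber μ κ := by
        rw [mul_eq_left (hκ₀.trans hκD) hκD (aleph0_pos.trans_le hκ₀).ne', hD_card]

/-- Let `μ` be a singular cardinal of cofinality `κ`, `δ ≤ μ`
an ordinal, and `I` a `κ⁺`-complete proper ideal on `δ`.  If `F ⊆ κ^δ` is an
`I`-almost distinct family, then `𝔡_μ ≥ |F|`. -/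
theorem domNumber_ge_of_adf (μ κ : Cardinal.{u})
    (hμ : ℵ₀ ≤ μ) (hsing : μ.ord.cof < μ) (hκ : μ.ord.cof = κ)
    (δ : Ordinal.{u}) (hδ : δ ≤ μ.ord)
    (I : Set (Set δ.ToType)) (hI : IsSetIdeal I)
    (hproper : Set.univ ∉ I)
    (hcomp : IdealComplete I (Order.succ κ))
    (F : Set (δ.ToType → κ.ord.ToType))
    (hF : ∀ f ∈ F, ∀ g ∈ F, f ≠ g → {a | f a = g a} ∈ I) :
    #F ≤ domNumber μ κ :=
  domNumber_ge_of_adf_general μ κ hμ hsing hκ δ hδ I hproper hcomp F hF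
end

section
/- Let λ₀, λ₁, λ₂, λ₃ be cardinals with λ₁ ≤ λ₂, and let I, J be ideals on sets A, B respectively. Suppose F is an I-almost distinct family of functions from A to λ₁ with |F| = λ₀, and G is a J-almost distinct family of functions from B to λ₃ with |G| = λ₂. Then there is an (I × J)-almost distinct family H of functions from A × B to λ₃ with |H| = λ₀. -/
/-!
Since `|λ₁| ≤ |G|`, each value `x < λ₁` can be replaced by a distinct member `ι x` of `G`;
`f ∈ F` then becomes `(a, b) ↦ ι (f a) b`. Off the `I`-small set where two members of `F`
agree, the corresponding rows are distinct members of `G`, so they agree only on a `J`-small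
set of columns.
-/

universe u

open Cardinal

/-- The Fubini product ideal `I × J` on `A × B`:
`X ∈ I × J` iff `{a ∈ A : {b ∈ B : (a,b) ∈ X} ∉ J} ∈ I`. -/
def fubiniProd {A B : Type u} (I : Set (Set A)) (J : Set (Set B)) :
    Set (Set (A × B)) :=
  {X | {a : A | {b : B | (a, b) ∈ X} ∉ J} ∈ I}

def IsAlmostDistinct {X α : Type*} (I : Set (Set X)) (F : Set (X → α)) : Prop :=
  ∀ f ∈ F, ∀ g ∈ F, f ≠ g → {x | f x = g x} ∈ I

def fubiniLift {A B α γ : Type*} (ι : α → B → γ) (f : A → α) : A × B → γ :=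
  fun p => ι (f p.1) p.2

lemma fubiniLift_injective {A B α γ : Type*} {ι : α → B → γ} (hι : Function.Injective ι) :
    Function.Injective (fubiniLift (A := A) ι) := by
  intro f g hfg
  funext a
  exact hι (funext fun b => congrFun hfg (a, b))

lemma mem_fubiniProd_of_subset {A B : Type u} {I : Set (Set A)} {J : Set (Set B)}
    (hI : ∀ s t : Set A, s ⊆ t → t ∈ I → s ∈ I) {S : Set A} (hS : S ∈ I) {X : Set (A × B)}
    (hX : ∀ a ∉ S, {b | (a, b) ∈ X} ∈ J) : X ∈ fubiniProd I J :=
  hI _ S (fun a ha => by_contra fun haS => ha (hX a haS)) hS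

lemma isAlmostDistinct_image_fubiniLift {A B : Type u} {α γ : Type*}
    {I : Set (Set A)} {J : Set (Set B)} (hI : ∀ s t : Set A, s ⊆ t → t ∈ I → s ∈ I)
    {ι : α → B → γ} (hι : Function.Injective ι) (hιJ : IsAlmostDistinct J (Set.range ι))
    {F : Set (A → α)} (hF : IsAlmostDistinct I F) :
    IsAlmostDistinct (fubiniProd I J) (fubiniLift ι '' F) := by
  rintro _ ⟨f, hf, rfl⟩ _ ⟨g, hg, rfl⟩ hne
  refine mem_fubiniProd_of_subset hI (hF f hf g hg (ne_of_apply_ne _ hne)) fun a ha => ?_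
  exact hιJ _ ⟨f a, rfl⟩ _ ⟨g a, rfl⟩ (hι.ne ha)

theorem combine_adfs_general {A B : Type u} (lam0 lam1 lam2 lam3 : Cardinal.{u})
    (h12 : lam1 ≤ lam2)
    (I : Set (Set A)) (J : Set (Set B))
    (hI : IsSetIdeal I)
    (F : Set (A → lam1.ord.ToType))
    (hFad : ∀ f ∈ F, ∀ g ∈ F, f ≠ g → {a | f a = g a} ∈ I)
    (hFcard : #F = lam0)
    (G : Set (B → lam3.ord.ToType))
    (hGad : ∀ f ∈ G, ∀ g ∈ G, f ≠ g → {b | f b = g b} ∈ J)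
    (hGcard : #G = lam2) :
    ∃ H : Set (A × B → lam3.ord.ToType),
      (∀ f ∈ H, ∀ g ∈ H, f ≠ g → {p | f p = g p} ∈ fubiniProd I J) ∧
      #H = lam0 := by
  obtain ⟨e⟩ : Nonempty (lam1.ord.ToType ↪ G) := by
    rw [← Cardinal.le_def, hGcard, Cardinal.mk_ord_toType]
    exact h12
  have he : Function.Injective fun x => (e x : B → lam3.ord.ToType) :=
    Subtype.val_injective.comp e.injective
  have heG : IsAlmostDistinct J (Set.range fun x => (e x : B → lam3.ord.ToType)) := by
    rintro _ ⟨x, rfl⟩ _ ⟨y, rfl⟩ hxy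
    exact hGad _ (e x).2 _ (e y).2 hxy
  refine ⟨fubiniLift _ '' F, isAlmostDistinct_image_fubiniLift hI.1 he heG hFad, ?_⟩
  rw [Cardinal.mk_image_eq (fubiniLift_injective he), hFcard]

/-- If `F` is an `I`-a.d.f. of functions `A → λ₁` with
`|F| = λ₀`, `G` is a `J`-a.d.f. of functions `B → λ₃` with `|G| = λ₂`, and
`λ₁ ≤ λ₂`, then there is an `(I × J)`-a.d.f. `H` of functions `A × B → λ₃`
with `|H| = λ₀`. -/
theorem combine_adfs {A B : Type u} (lam0 lam1 lam2 lam3 : Cardinal.{u})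
    (h12 : lam1 ≤ lam2)
    (I : Set (Set A)) (J : Set (Set B))
    (hI : IsSetIdeal I) (hJ : IsSetIdeal J)
    (F : Set (A → lam1.ord.ToType))
    (hFad : ∀ f ∈ F, ∀ g ∈ F, f ≠ g → {a | f a = g a} ∈ I)
    (hFcard : #F = lam0)
    (G : Set (B → lam3.ord.ToType))
    (hGad : ∀ f ∈ G, ∀ g ∈ G, f ≠ g → {b | f b = g b} ∈ J)
    (hGcard : #G = lam2) :
    ∃ H : Set (A × B → lam3.ord.ToType),
      (∀ f ∈ H, ∀ g ∈ H, f ≠ g → {p | f p = g p} ∈ fubiniProd I J) ∧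
      #H = lam0 :=
  combine_adfs_general lam0 lam1 lam2 lam3 h12 I J hI F hFad hFcard G hGad hGcard
end

section
/- Let μ be a singular cardinal with cofinality κ. Then 𝔰_μ ≤ cf([μ]^κ, ⊆). -/
/-!
Let `κ = cf μ` and let `C` be cofinal in `[μ]^κ`. Split the successor cardinals below `μ` into
two classes, both unbounded in `μ`, and for `e ∈ C` let `A_e` be the set of points whose successor
in `e` has cofinality in the first class. Given `B ∈ [μ]^μ` and a regular `χ ∈ (κ, μ)`, the least
`δ` with `|B ∩ δ| = χ` has cofinality `χ`, so `e ∩ δ` is bounded below `δ` whenever `|e| = κ`, and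
then `δ` is the successor in `e` of `χ` many points of `B`. Taking such `δ` for `κ` many `χ` from
each class, unbounded in `μ`, and covering them by a single `e ∈ C` makes `A_e` split `B`. Hence
`{A_e | e ∈ C}` is a splitting family.
-/

universe u

open Cardinal

/-- `S` is a splitting family on `μ`: every member of `S` has cardinality `μ`,
and every `B ⊆ μ` of cardinality `μ` is split by some `A ∈ S`, that is,
`|B ∩ A| = |B \ A| = μ`. -/
def IsSplittingFamily (μ : Cardinal.{u}) (S : Set (Set μ.ord.ToType)) : Prop :=
  (∀ A ∈ S, #A = μ) ∧
  ∀ B : Set μ.ord.ToType, #B = μ → ∃ A ∈ S, #(B ∩ A : Set μ.ord.ToType) = μ ∧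
    #(B \ A : Set μ.ord.ToType) = μ

/-- `𝔰_μ`: the least cardinality of a splitting family on `μ`. -/
noncomputable def splitNumber (μ : Cardinal.{u}) : Cardinal.{u} :=
  sInf {c | ∃ S : Set (Set μ.ord.ToType), IsSplittingFamily μ S ∧ #S = c}

/-- `cf([T]^κ, ⊆)`: the least cardinality of a cofinal subset of
`([T]^κ, ⊆)`, that is, of a set `C` of subsets of `T` of cardinality `κ` such
that every subset of `T` of cardinality `κ` is contained in some member of
`C`. -/
noncomputable def cofSC (T : Type u) (κ : Cardinal.{u}) : Cardinal.{u} :=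
  sInf {c | ∃ C : Set (Set T),
    ((∀ x ∈ C, #x = κ) ∧ ∀ y : Set T, #y = κ → ∃ x ∈ C, y ⊆ x) ∧ #C = c}

open Order Ordinal Set

-- Any two disjoint classes of regular cardinals, both unbounded below every limit cardinal,
-- would do.
def alephParityClass (b : Bool) : Set Cardinal.{u} :=
  {c | ∃ (q : Ordinal.{u}) (n : ℕ), n % 2 = b.toNat ∧ c = ℵ_ (ω * q + n + 1)}

theorem isRegular_of_mem_alephParityClass {b : Bool} {c : Cardinal.{u}}
    (hc : c ∈ alephParityClass b) : c.IsRegular := by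
  obtain ⟨q, n, -, rfl⟩ := hc
  rw [← succ_aleph]
  exact isRegular_succ (aleph0_le_aleph _)

theorem eq_of_mem_alephParityClass {b b' : Bool} {c : Cardinal.{u}}
    (hb : c ∈ alephParityClass b) (hb' : c ∈ alephParityClass b') : b = b' := by
  obtain ⟨q, n, hn, rfl⟩ := hb
  obtain ⟨q', n', hn', h⟩ := hb'
  have hidx : ω * q + n = ω * q' + n' := by simpa using aleph.injective h
  have hmod : (n : Ordinal) % ω = (n' : Ordinal) % ω := by
    rw [← mul_add_mod_self ω q n, hidx, mul_add_mod_self]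
  rw [mod_eq_of_lt (natCast_lt_omega0 n), mod_eq_of_lt (natCast_lt_omega0 n'),
    Nat.cast_inj] at hmod
  subst hmod
  cases b <;> cases b' <;> simp_all

theorem exists_mem_alephParityClass_between (b : Bool) {μ ν : Cardinal.{u}} (hμ : IsSuccLimit μ)
    (hν : ℵ₀ ≤ ν) (hνμ : ν < μ) : ∃ c ∈ alephParityClass b, ν < c ∧ c < μ := by
  suffices ∃ c ∈ alephParityClass b, ν < c ∧ c ≤ succ (succ ν) by
    obtain ⟨c, hc, hνc, hcν⟩ := this
    exact ⟨c, hc, hνc, hcν.trans_lt (hμ.succ_lt (hμ.succ_lt hνμ))⟩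
  obtain ⟨i, rfl⟩ := mem_range_aleph_iff.2 hν
  obtain ⟨k, hk⟩ := lt_omega0.1 (mod_lt i omega0_ne_zero)
  obtain ⟨q, rfl⟩ : ∃ q, i = ω * q + k := ⟨i / ω, hk ▸ (div_add_mod i ω).symm⟩
  have hb := Bool.toNat_le b
  set n := k + (k + b.toNat) % 2
  refine ⟨ℵ_ (ω * q + n + 1), ⟨q, n, by omega, rfl⟩, ?_, ?_⟩
  · rw [aleph_lt_aleph, add_assoc, add_lt_add_iff_left]
    exact_mod_cast (by omega : k < n + 1)
  · rw [succ_aleph, succ_aleph, aleph_le_aleph, add_assoc, add_assoc, add_assoc,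
      add_le_add_iff_left]
    exact_mod_cast (by omega : n + 1 ≤ k + (1 + 1))

theorem exists_superset_mk_eq {α : Type u} {Y : Set α} {κ : Cardinal.{u}} (hκ : ℵ₀ ≤ κ)
    (hY : #Y ≤ κ) (hα : κ ≤ #α) : ∃ Z, Y ⊆ Z ∧ #Z = κ := by
  obtain ⟨Z, hZ⟩ := le_mk_iff_exists_set.1 hα
  refine ⟨Y ∪ Z, subset_union_left, le_antisymm ?_ (hZ ▸ mk_le_mk_of_subset subset_union_right)⟩
  calc #(Y ∪ Z : Set α) ≤ #Y + #Z := mk_union_le Y Z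
    _ ≤ κ + κ := add_le_add hY hZ.le
    _ = κ := add_eq_self hκ

section WellOrder

variable {α : Type u} [LinearOrder α]

theorem exists_le_mk_inter_Iio [NoMaxOrder α] {B : Set α} {χ : Cardinal.{u}} (hB : ℵ₀ ≤ #B)
    (hcof : Order.cof α < #B) (hχ : χ < #B) : ∃ t, χ ≤ #(B ∩ Iio t : Set α) := by
  by_contra! h
  obtain ⟨s, hs, hscard⟩ := Order.exists_cof_eq α
  have hcover : B ⊆ ⋃ x : s, B ∩ Iio x.1 := fun b hb => by
    obtain ⟨b', hb'⟩ := exists_gt b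
    obtain ⟨x, hx, hbx⟩ := hs b'
    exact mem_iUnion.2 ⟨⟨x, hx⟩, hb, hb'.trans_le hbx⟩
  have := calc #B ≤ #s * ⨆ x : s, #(B ∩ Iio x.1 : Set α) :=
        (mk_le_mk_of_subset hcover).trans (mk_iUnion_le _)
    _ ≤ Order.cof α * χ := mul_le_mul' hscard.le (ciSup_le' fun x => (h x).le)
    _ < #B := mul_lt_of_lt hB hcof hχ
  exact this.false

def IsCardThreshold (B : Set α) (χ : Cardinal.{u}) (δ : α) : Prop :=
  χ ≤ #(B ∩ Iio δ : Set α) ∧ ∀ y < δ, #(B ∩ Iio y : Set α) < χ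

theorem IsCardThreshold.le_mk_inter_Ico {B : Set α} {χ : Cardinal.{u}} {δ y : α}
    (hδ : IsCardThreshold B χ δ) (hχ : ℵ₀ ≤ χ) (hy : y < δ) : χ ≤ #(B ∩ Ico y δ : Set α) := by
  by_contra! h
  have hsub : B ∩ Iio δ ⊆ (B ∩ Iio y) ∪ (B ∩ Ico y δ) := fun x ⟨hxB, hxδ⟩ =>
    (lt_or_ge x y).imp (fun hxy => ⟨hxB, hxy⟩) fun hxy => ⟨hxB, hxy, hxδ⟩
  exact (hδ.1.trans ((mk_le_mk_of_subset hsub).trans (mk_union_le _ _))).not_gt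
    (add_lt_of_lt hχ (hδ.2 y hy) h)

theorem exists_lt_forall_lt_of_mk_lt_cof_Iio {δ : α} {e : Set α} (he : #e < Order.cof (Iio δ)) :
    ∃ b < δ, ∀ x ∈ e, x < δ → x < b := by
  have hcard : #(Subtype.val ⁻¹' e : Set (Iio δ)) < Order.cof (Iio δ) :=
    (mk_preimage_of_injective _ e Subtype.val_injective).trans_lt he
  have hnot : ¬ IsCofinal (Subtype.val ⁻¹' e : Set (Iio δ)) := fun h => (cof_le h).not_gt hcard
  simp only [IsCofinal, not_forall, not_exists, not_and, not_le] at hnot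
  obtain ⟨b, hb⟩ := hnot
  exact ⟨b, b.2, fun x hx hxδ => hb ⟨x, hxδ⟩ hx⟩

def nextCofIn (e : Set α) (D : Set Cardinal.{u}) : Set α :=
  {t | ∃ δ, IsLeast {x | x ∈ e ∧ t < x} δ ∧ Order.cof (Iio δ) ∈ D}

theorem mem_nextCofIn_iff_of_isLeast {e : Set α} {D : Set Cardinal.{u}} {t δ : α}
    (h : IsLeast {x | x ∈ e ∧ t < x} δ) : t ∈ nextCofIn e D ↔ Order.cof (Iio δ) ∈ D :=
  ⟨fun ⟨_, h', hD⟩ => h.unique h' ▸ hD, fun hD => ⟨δ, h, hD⟩⟩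

theorem isLeast_setOf_mem_gt {e : Set α} {b t δ : α} (hδe : δ ∈ e)
    (hb : ∀ x ∈ e, x < δ → x < b) (ht : t ∈ Ico b δ) : IsLeast {x | x ∈ e ∧ t < x} δ :=
  ⟨⟨hδe, ht.2⟩, fun x ⟨hxe, htx⟩ => not_lt.1 fun hxδ => (hb x hxe hxδ).not_ge (ht.1.trans htx.le)⟩

variable [WellFoundedLT α]

theorem exists_mk_Iio_eq_of_lt {c : Cardinal.{u}} (hc : c < #α) : ∃ x : α, #(Iio x) = c := by
  have hlt : c.ord < typeLT α := (ord_lt_ord.2 hc).trans_le (ord_card_le _)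
  refine ⟨enum (α := α) (· < ·) ⟨c.ord, hlt⟩, ?_⟩
  have h := congrArg card (typein_enum (α := α) (· < ·) hlt)
  rwa [card_typein, card_ord] at h

theorem Order.cof_eq_of_forall_mk_Iio_lt {χ : Cardinal.{u}} (hχ : χ.IsRegular) (hα : χ ≤ #α)
    (h : ∀ x : α, #(Iio x) < χ) : Order.cof α = χ := by
  have htype : typeLT α = χ.ord := by
    refine le_antisymm (le_of_forall_lt fun o ho => ?_) ((ord_le_ord.2 hα).trans (ord_card_le _))
    rw [← typein_enum (α := α) (· < ·) ho, lt_ord, card_typein]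
    exact h _
  rw [← cof_type, htype, hχ.cof_ord]

theorem exists_isCardThreshold {B : Set α} {χ : Cardinal.{u}} {t : α}
    (ht : χ ≤ #(B ∩ Iio t : Set α)) : ∃ δ, IsCardThreshold B χ δ := by
  obtain ⟨δ, hδ, hmin⟩ := wellFounded_lt.has_min {t | χ ≤ #(B ∩ Iio t : Set α)} ⟨t, ht⟩
  exact ⟨δ, hδ, fun y hy => not_le.1 fun h => hmin y h hy⟩

theorem IsCardThreshold.cof_Iio {B : Set α} {χ : Cardinal.{u}} {δ : α}
    (hδ : IsCardThreshold B χ δ) (hχ : χ.IsRegular) : Order.cof (Iio δ) = χ := by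
  let f : ↥(B ∩ Iio δ) → Iio δ := fun x => ⟨x.1, x.2.2⟩
  have hcofinal : IsCofinal (range f) := fun y => by
    obtain ⟨x, hxB, hyx, hxδ⟩ : (B ∩ Ico y.1 δ).Nonempty := nonempty_coe_sort.1 <|
      mk_ne_zero_iff.1 (hχ.pos.trans_le (hδ.le_mk_inter_Ico hχ.aleph0_le y.2)).ne'
    exact ⟨f ⟨x, hxB, hxδ⟩, mem_range_self _, hyx⟩
  rw [← cof_congr_of_strictMono (f := f) (fun x y hxy => hxy) hcofinal]
  refine Order.cof_eq_of_forall_mk_Iio_lt hχ hδ.1 fun x => ?_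
  calc #(Iio x) = #(Subtype.val '' Iio x) := (mk_image_eq Subtype.val_injective).symm
    _ ≤ #(B ∩ Iio x.1 : Set α) := mk_le_mk_of_subset (by
        rintro _ ⟨y, hy, rfl⟩
        exact ⟨y.2.1, hy⟩)
    _ < χ := hδ.2 x x.2.2

theorem IsCardThreshold.exists_subset_forall_mem_nextCofIn_iff {B e : Set α} {χ : Cardinal.{u}}
    {δ : α} (hδ : IsCardThreshold B χ δ) (hχ : χ.IsRegular) (he : #e < χ) (hδe : δ ∈ e)
    (D : Set Cardinal.{u}) : ∃ W ⊆ B, χ ≤ #W ∧ ∀ t ∈ W, t ∈ nextCofIn e D ↔ χ ∈ D := by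
  obtain ⟨b, hbδ, hb⟩ := exists_lt_forall_lt_of_mk_lt_cof_Iio (he.trans_eq (hδ.cof_Iio hχ).symm)
  refine ⟨B ∩ Ico b δ, inter_subset_left, hδ.le_mk_inter_Ico hχ.aleph0_le hbδ, fun t ht => ?_⟩
  rw [mem_nextCofIn_iff_of_isLeast (isLeast_setOf_mem_gt hδe hb ht.2), hδ.cof_Iio hχ]

theorem le_mk_sep_mem_nextCofIn_iff {B e : Set α} {D : Set Cardinal.{u}} {p : Prop}
    {μ : Cardinal.{u}} (h : ∀ c < μ, ∃ χ, ∃ δ ∈ e, IsCardThreshold B χ δ ∧ χ.IsRegular ∧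
      c < χ ∧ #e < χ ∧ (χ ∈ D ↔ p)) :
    μ ≤ #{t ∈ B | t ∈ nextCofIn e D ↔ p} := by
  refine le_of_forall_lt fun c hc => ?_
  obtain ⟨χ, δ, hδe, hδ, hχ, hcχ, he, hχD⟩ := h c hc
  obtain ⟨W, hWB, hWχ, hW⟩ := hδ.exists_subset_forall_mem_nextCofIn_iff hχ he hδe D
  calc c < χ := hcχ
    _ ≤ #W := hWχ
    _ ≤ #{t ∈ B | t ∈ nextCofIn e D ↔ p} :=
      mk_le_mk_of_subset fun t ht => ⟨hWB ht, (hW t ht).trans hχD⟩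

end WellOrder

theorem Cardinal.exists_cofinal_family (μ : Cardinal.{u}) :
    ∃ (ι : Type u) (ν : ι → Cardinal.{u}), #ι = μ.ord.cof ∧ (∀ i, ν i < μ) ∧
      ∀ c < μ, ∃ i, c ≤ ν i := by
  obtain ⟨s, hs, hscard⟩ := Order.exists_cof_eq μ.ord.ToType
  have hα : #μ.ord.ToType = μ := mk_ord_toType μ
  refine ⟨s, fun x => #(Iio x.1), by rw [hscard, cof_toType], fun x => ?_, fun c hc => ?_⟩
  · exact (mk_Iio_lt x.1 (by rw [hα, type_toType])).trans_eq hα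
  · obtain ⟨t, rfl⟩ := exists_mk_Iio_eq_of_lt (hα.symm ▸ hc)
    obtain ⟨x, hx, htx⟩ := hs t
    exact ⟨⟨x, hx⟩, mk_le_mk_of_subset (Iio_subset_Iio htx)⟩

theorem exists_nextCofIn_splits {μ : Cardinal.{u}} (hμ : μ.IsSingular)
    {C : Set (Set μ.ord.ToType)} (hCcard : ∀ x ∈ C, #x ≤ μ.ord.cof)
    (hC : ∀ y : Set μ.ord.ToType, #y = μ.ord.cof → ∃ x ∈ C, y ⊆ x)
    {B : Set μ.ord.ToType} (hB : #B = μ) :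
    ∃ e ∈ C, #(B ∩ nextCofIn e (alephParityClass false) : Set μ.ord.ToType) = μ ∧
      #(B \ nextCofIn e (alephParityClass false) : Set μ.ord.ToType) = μ := by
  set κ := μ.ord.cof
  set D : Set Cardinal.{u} := alephParityClass false
  have hκ : ℵ₀ ≤ κ := (isRegular_cof (isSuccLimit_ord hμ.aleph0_le)).aleph0_le
  have hκμ : κ < μ := hμ.cof_ord_lt
  have hα : #μ.ord.ToType = μ := mk_ord_toType μ
  have := noMaxOrder hμ.aleph0_le
  obtain ⟨ι, ν, hι, hνμ, hνcof⟩ := exists_cofinal_family μ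
  have hχ : ∀ b i, ∃ χ ∈ alephParityClass b, ν i ⊔ κ < χ ∧ χ < μ := fun b i =>
    exists_mem_alephParityClass_between b hμ.isSuccLimit (le_sup_of_le_right hκ)
      (max_lt (hνμ i) hκμ)
  choose χ hχb hχlt hχμ using hχ
  have hδ : ∀ b i, ∃ δ, IsCardThreshold B (χ b i) δ := fun b i => by
    obtain ⟨t, ht⟩ := exists_le_mk_inter_Iio (hB ▸ hμ.aleph0_le)
      (by rwa [hB, cof_toType]) (hB ▸ hχμ b i)
    exact exists_isCardThreshold ht
  choose δ hδ using hδ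
  have hrange : #(range (Function.uncurry δ)) ≤ κ := mk_range_le.trans <| by
    simpa [hι] using (Cardinal.mul_eq_right hκ (ofNat_lt_aleph0.le.trans hκ) two_ne_zero).le
  obtain ⟨Z, hYZ, hZ⟩ := exists_superset_mk_eq hκ hrange (hκμ.le.trans_eq hα.symm)
  obtain ⟨e, heC, hZe⟩ := hC Z hZ
  have hsplit (b : Bool) : μ ≤ #{t ∈ B | t ∈ nextCofIn e D ↔ b = false} := by
    refine le_mk_sep_mem_nextCofIn_iff fun c hc => ?_
    obtain ⟨i, hi⟩ := hνcof c hc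
    exact ⟨χ b i, δ b i, hZe (hYZ ⟨(b, i), rfl⟩), hδ b i,
      isRegular_of_mem_alephParityClass (hχb b i), hi.trans_lt (le_sup_left.trans_lt (hχlt b i)),
      (hCcard e heC).trans_lt (le_sup_right.trans_lt (hχlt b i)),
      ⟨eq_of_mem_alephParityClass (hχb b i), fun h => h ▸ hχb b i⟩⟩
  refine ⟨e, heC, le_antisymm ((mk_le_mk_of_subset inter_subset_left).trans_eq hB) ?_,
    le_antisymm ((mk_le_mk_of_subset sdiff_subset).trans_eq hB) ?_⟩
  · simpa using hsplit false
  · have h := hsplit true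
    simp only [Bool.true_eq_false, iff_false] at h
    exact h

theorem splitNumber_le_mk {μ : Cardinal.{u}} {S : Set (Set μ.ord.ToType)}
    (hS : IsSplittingFamily μ S) : splitNumber μ ≤ #S :=
  csInf_le' ⟨S, hS, rfl⟩

theorem exists_mk_eq_cofSC (T : Type u) (κ : Cardinal.{u}) :
    ∃ C : Set (Set T), (∀ x ∈ C, #x = κ) ∧ (∀ y : Set T, #y = κ → ∃ x ∈ C, y ⊆ x) ∧
      #C = cofSC T κ := by
  obtain ⟨C, ⟨hCcard, hC⟩, hCeq⟩ := csInf_mem (α := Cardinal.{u}) (s := {c | ∃ C : Set (Set T),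
      ((∀ x ∈ C, #x = κ) ∧ ∀ y : Set T, #y = κ → ∃ x ∈ C, y ⊆ x) ∧ #C = c})
    ⟨_, {x | #x = κ}, ⟨fun _ hx => hx, fun y hy => ⟨y, hy, subset_rfl⟩⟩, rfl⟩
  exact ⟨C, hCcard, hC, hCeq⟩

/-- Let `μ` be a singular cardinal of cofinality `κ`.
Then `𝔰_μ ≤ cf([μ]^κ, ⊆)`. -/
theorem splitNumber_le_cofSC (μ κ : Cardinal.{u})
    (hμ : ℵ₀ ≤ μ) (hsing : μ.ord.cof < μ) (hκ : μ.ord.cof = κ) :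
    splitNumber μ ≤ cofSC μ.ord.ToType κ := by
  subst hκ
  obtain ⟨C, hCcard, hC, hCeq⟩ := exists_mk_eq_cofSC μ.ord.ToType μ.ord.cof
  let A : Set μ.ord.ToType → Set μ.ord.ToType := fun e => nextCofIn e (alephParityClass false)
  have hS : IsSplittingFamily μ {a ∈ A '' C | #a = μ} := by
    refine ⟨fun a ha => ha.2, fun B hB => ?_⟩
    obtain ⟨e, he, hBA, hBA'⟩ :=
      exists_nextCofIn_splits ⟨hμ, hsing.ne⟩ (fun x hx => (hCcard x hx).le) hC hB
    refine ⟨A e, ⟨mem_image_of_mem A he, le_antisymm ?_ ?_⟩, hBA, hBA'⟩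
    · exact (mk_set_le _).trans_eq (mk_ord_toType μ)
    · exact hBA.ge.trans (mk_le_mk_of_subset inter_subset_right)
  calc splitNumber μ ≤ #{a ∈ A '' C | #a = μ} := splitNumber_le_mk hS
    _ ≤ #C := (mk_le_mk_of_subset (sep_subset _ _)).trans mk_image_le
    _ = cofSC μ.ord.ToType μ.ord.cof := hCeq
end
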